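/- Smallest eigenvalues criterion: Let A be an N_r × N_r Hermitian positive semidefinite matrix with eigenvalues λ_1 ≥ … ≥ λ_{N_r} ≥ 0 and corresponding orthonormal eigenvectors v_1, …, v_{N_r}. For V = [v_{N_r−N_t+1}, …, v_{N_r}] (the eigenvectors of the N_t smallest eigenvalues), det(I_{N_t} + P·V† A V) = Π_{n=N_r−N_t+1}^{N_r} (1 + P·λ_n), and this is the minimum of det(I_{N_t} + P·W† A W) over all N_r × N_t matrices W with W†W = I_{N_t}. -/

import Mathlib

/-!
Write `A = U diag(λ) Uᴴ` and `Y = Uᴴ W`, so that `Yᴴ Y = 1` and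
`1 + P Wᴴ A W = Yᴴ diag(d) Y` with `d = 1 + P λ` nonnegative and antitone. By Cauchy–Binet,
`det (Yᴴ diag(d) Y) = ∑_S (∏_{i ∈ S} d i) |det Y_S|²` over the `N_t`-subsets `S` of rows, and the
weights `|det Y_S|²` sum to `det (Yᴴ Y) = 1`. Each product is at least the one over the last
`N_t` indices, and for `W = V` the compression is already diagonal with exactly that product.
-/

open Matrix Finset
open scoped ComplexOrder

section CauchyBinet

open Equiv Function

variable {ι R : Type*} [LinearOrder ι] [CommRing R] {k : ℕ}

theorem Tuple.strictMono_comp_sort {p : Fin k → ι} (hp : Injective p) :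
    StrictMono (p ∘ Tuple.sort p) :=
  (Tuple.monotone_sort p).strictMono_of_injective (hp.comp (Tuple.sort p).injective)

theorem Tuple.sort_comp_perm_of_strictMono {f : Fin k → ι} (hf : StrictMono f)
    (σ : Perm (Fin k)) : Tuple.sort (f ∘ σ) = σ⁻¹ := by
  refine (Tuple.eq_sort_iff.mpr ⟨?_, fun i j hij hfij => ?_⟩).symm
  · simpa [Function.comp_def] using hf.monotone
  · simp only [Perm.coe_inv, Function.comp_apply, Equiv.apply_symm_apply] at hfij
    exact absurd (hf.injective hfij) hij.ne

/-- An injective tuple `p` factors uniquely as `(p ∘ sort p) ∘ (sort p)⁻¹` with the first factor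
strictly monotone. -/
theorem Finset.sum_injective_eq_sum_orderEmbedding_perm [Fintype ι] {M : Type*}
    [AddCommMonoid M] (F : (Fin k → ι) → M) :
    ∑ p with Injective p, F p = ∑ f : Fin k ↪o ι, ∑ σ : Perm (Fin k), F (f ∘ σ) := by
  rw [← Fintype.sum_prod_type']
  refine Finset.sum_bij'
    (fun p hp => (OrderEmbedding.ofStrictMono _
      (Tuple.strictMono_comp_sort (Finset.mem_filter.mp hp).2), (Tuple.sort p)⁻¹))
    (fun x _ => x.1 ∘ x.2) (fun _ _ => Finset.mem_univ _) (fun x _ => ?_) (fun p _ => ?_)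
    (fun x _ => ?_) (fun p _ => ?_)
  · simpa using x.1.injective.comp x.2.injective
  · ext i; simp
  · have hsort := Tuple.sort_comp_perm_of_strictMono x.1.strictMono x.2
    ext i <;> simp [hsort]
  · simp [Function.comp_def]

theorem Matrix.det_mul_eq_sum_prod_mul_det_submatrix {m n : Type*} [Fintype m] [Fintype n]
    [DecidableEq n] (A : Matrix n m R) (B : Matrix m n R) :
    (A * B).det = ∑ p : n → m, (∏ i, B (p i) i) * (A.submatrix id p).det := by
  simp only [det_apply', mul_apply, prod_univ_sum, mul_sum, Fintype.piFinset_univ]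
  rw [Finset.sum_comm]
  refine Finset.sum_congr rfl fun p _ => Finset.sum_congr rfl fun σ _ => ?_
  simp only [submatrix_apply, id, prod_mul_distrib]
  ring

theorem Matrix.det_mul_eq_sum_orderEmbedding [Fintype ι] (A : Matrix (Fin k) ι R)
    (B : Matrix ι (Fin k) R) :
    (A * B).det = ∑ f : Fin k ↪o ι, (A.submatrix id f).det * (B.submatrix f id).det := by
  rw [det_mul_eq_sum_prod_mul_det_submatrix,
    ← Finset.sum_filter_of_ne (p := Injective) fun p _ hp => ?_,
    sum_injective_eq_sum_orderEmbedding_perm]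
  · refine Finset.sum_congr rfl fun f _ => ?_
    have hperm (σ : Perm (Fin k)) :
        (A.submatrix id (f ∘ σ)).det = Perm.sign σ * (A.submatrix id f).det := by
      rw [← det_permute', submatrix_submatrix]; rfl
    simp only [hperm, det_apply' (B.submatrix f id), Finset.mul_sum]
    refine Finset.sum_congr rfl fun σ _ => ?_
    simp only [submatrix_apply, id, Function.comp_apply]
    ring
  · by_contra hinj
    obtain ⟨i, j, hij, hne⟩ : ∃ i j, p i = p j ∧ i ≠ j := by
      simpa [Injective] using hinj
    exact hp (by rw [det_zero_of_column_eq hne fun _ => by simp [hij], mul_zero])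

end CauchyBinet

theorem Matrix.det_conjTranspose_mul_diagonal_mul {ι : Type*} [Fintype ι] [LinearOrder ι]
    {k : ℕ} (Y : Matrix ι (Fin k) ℂ) (d : ι → ℝ) :
    (Yᴴ * diagonal (fun i => (d i : ℂ)) * Y).det =
      ((∑ f : Fin k ↪o ι, (∏ i, d (f i)) * Complex.normSq (Y.submatrix f id).det : ℝ) : ℂ) := by
  rw [det_mul_eq_sum_orderEmbedding]
  push_cast
  refine Finset.sum_congr rfl fun f _ => ?_
  have hsub : (Yᴴ * diagonal (fun i => (d i : ℂ))).submatrix id f =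
      (Y.submatrix f id)ᴴ * diagonal (fun i => (d (f i) : ℂ)) := by
    ext a b; simp [mul_diagonal]
  rw [hsub, det_mul, det_diagonal, det_conjTranspose, Complex.normSq_eq_conj_mul_self]
  simp only [RCLike.star_def]
  ring

theorem StrictMono.val_le_sub_add {k n : ℕ} {f : Fin k → Fin n} (hf : StrictMono f) (a : Fin k) :
    (f a : ℕ) ≤ n - k + a := by
  have hcard : #(Finset.Ici a) ≤ #(Finset.Ici (f a)) :=
    Finset.card_le_card_of_injOn f (fun b hb => by simpa using hf.monotone (by simpa using hb))
      hf.injective.injOn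
  simp only [Fin.card_Ici] at hcard
  have := (f a).isLt
  have := a.isLt
  omega

theorem Matrix.prod_le_re_det_conjTranspose_mul_diagonal_mul {k n : ℕ} (hkn : k ≤ n)
    {d : Fin n → ℝ} (hd₀ : ∀ i, 0 ≤ d i) (hd : Antitone d)
    {Y : Matrix (Fin n) (Fin k) ℂ} (hY : Yᴴ * Y = 1) :
    ∏ j : Fin k, d (Fin.cast (Nat.sub_add_cancel hkn) (Fin.natAdd (n - k) j)) ≤
      (Yᴴ * diagonal (fun i => (d i : ℂ)) * Y).det.re := by
  have hnorm : ∑ f : Fin k ↪o Fin n, Complex.normSq (Y.submatrix f id).det = 1 := by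
    have h := det_conjTranspose_mul_diagonal_mul Y 1
    simp only [Pi.one_apply, Complex.ofReal_one, diagonal_one, Matrix.mul_one, hY, det_one,
      prod_const_one, one_mul] at h
    exact_mod_cast h.symm
  rw [det_conjTranspose_mul_diagonal_mul, Complex.ofReal_re, ← mul_one (∏ j : Fin k, _), ← hnorm,
    Finset.mul_sum]
  gcongr with f _ j
  · exact Complex.normSq_nonneg _
  · exact fun _ _ => hd₀ _
  · exact hd (Fin.le_def.mpr (by simpa [add_comm] using f.strictMono.val_le_sub_add j))

theorem Matrix.one_add_smul_conjTranspose_mul_mul {ι κ : Type*} [Fintype ι] [DecidableEq ι]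
    [Fintype κ] [DecidableEq κ] {U : Matrix ι ι ℂ} (hU : U * Uᴴ = 1) (lam : ι → ℂ) (c : ℂ)
    {X : Matrix ι κ ℂ} (hX : Xᴴ * X = 1) :
    1 + c • (Xᴴ * (U * diagonal lam * Uᴴ) * X) =
      (Uᴴ * X)ᴴ * diagonal (fun i => 1 + c * lam i) * (Uᴴ * X) := by
  have hdiag : diagonal (fun i => 1 + c * lam i) = 1 + c • diagonal lam := by
    ext i j; by_cases h : i = j <;> simp [h]
  rw [hdiag, conjTranspose_mul, conjTranspose_conjTranspose, Matrix.mul_add, Matrix.add_mul,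
    Matrix.mul_one, Matrix.mul_assoc Xᴴ U, ← Matrix.mul_assoc U, hU, Matrix.one_mul, hX,
    Matrix.mul_smul, Matrix.smul_mul]
  simp only [Matrix.mul_assoc]

theorem stmt_18 (Nt Nr : ℕ) (hNt : Nt ≤ Nr)
    (A : Matrix (Fin Nr) (Fin Nr) ℂ) (hA : A.PosSemidef)
    (P : ℝ) (hP : 0 < P)
    (lam : Fin Nr → ℝ) (hsorted : ∀ i j : Fin Nr, i ≤ j → lam j ≤ lam i)
    (U : Matrix (Fin Nr) (Fin Nr) ℂ) (hU : Uᴴ * U = 1)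
    (hdecomp : A = U * Matrix.diagonal (fun i => (lam i : ℂ)) * Uᴴ)
    (V : Matrix (Fin Nr) (Fin Nt) ℂ)
    (hV : V = fun i (j : Fin Nt) => U i ⟨Nr - Nt + (j : ℕ), by omega⟩) :
    (1 + (P : ℂ) • (Vᴴ * A * V)).det =
      ∏ j : Fin Nt, ((1 + P * lam ⟨Nr - Nt + (j : ℕ), by omega⟩ : ℝ) : ℂ) ∧
    ∀ W : Matrix (Fin Nr) (Fin Nt) ℂ, Wᴴ * W = 1 →
      (1 + (P : ℂ) • (Vᴴ * A * V)).det.re ≤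
        (1 + (P : ℂ) • (Wᴴ * A * W)).det.re := by
  set emb : Fin Nt → Fin Nr := fun j => ⟨Nr - Nt + j, by omega⟩
  have hemb : Function.Injective emb := fun a b h => Fin.ext (by simpa [emb] using h)
  have hD : Uᴴ * A * U = diagonal (fun i => (lam i : ℂ)) := by
    rw [hdecomp, ← Matrix.mul_assoc, ← Matrix.mul_assoc, hU, Matrix.one_mul, Matrix.mul_assoc, hU,
      Matrix.mul_one]
  have hVAV : Vᴴ * A * V = diagonal ((fun i => (lam i : ℂ)) ∘ emb) := by
    rw [← submatrix_diagonal _ _ hemb, ← hD, submatrix_mul _ _ _ id _ Function.bijective_id,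
      submatrix_mul _ _ _ id _ Function.bijective_id, submatrix_id_id, ← conjTranspose_submatrix,
      show V = U.submatrix id emb from hV]
  have hV_det : (1 + (P : ℂ) • (Vᴴ * A * V)).det = ∏ j, ((1 + P * lam (emb j) : ℝ) : ℂ) := by
    rw [hVAV, ← det_diagonal]
    congr 1
    ext i j; by_cases h : i = j <;> simp [h]
  refine ⟨hV_det, fun W hW => ?_⟩
  have hlam₀ (i : Fin Nr) : 0 ≤ lam i := by
    have hpsd := hA.conjTranspose_mul_mul_same U
    rw [hD, posSemidef_diagonal_iff] at hpsd
    exact_mod_cast hpsd i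
  have hUW : (Uᴴ * W)ᴴ * (Uᴴ * W) = 1 := by
    rw [conjTranspose_mul, conjTranspose_conjTranspose, Matrix.mul_assoc, ← Matrix.mul_assoc U,
      mul_eq_one_comm.mp hU, Matrix.one_mul, hW]
  have hbound := prod_le_re_det_conjTranspose_mul_diagonal_mul hNt
    (d := fun i => 1 + P * lam i) (fun i => by have := hlam₀ i; positivity)
    (fun i j hij => by simpa using mul_le_mul_of_nonneg_left (hsorted i j hij) hP.le) hUW
  rw [hV_det, ← Complex.ofReal_prod, Complex.ofReal_re, hdecomp,
    one_add_smul_conjTranspose_mul_mul (mul_eq_one_comm.mp hU) _ _ hW]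
  push_cast at hbound ⊢
  exact hbound
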